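/- Let S be a generalized telescopic semigroup in ℤ² spanned by {α_i}_{i=1}^r, where α₁, ..., α_{r-1} lie on a line L through the origin, α_r ∉ L, and the semigroup generated by α₁,...,α_{r-1} is isomorphic (as ordered semigroup) to a telescopic semigroup ⟨β₁,...,β_{r-1}⟩ via α_i ↦ β_i. Then every α ∈ S can be written uniquely as α = Σ_{i=1}^r a_i α_i with a₁, a_r ≥ 0 and 0 ≤ a_i < gcd(β₁,...,β_{i-1})/gcd(β₁,...,β_i) for 2 ≤ i ≤ r−1. -/

import Mathlib

/-!
The linear form `(x, y) ↦ u x + v y` vanishes on `α₁, …, α_{r-1}` but not on `α_r`, so it reads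
off the coefficient of `α_r`; what is left is a representation in `⟨α₁, …, α_{r-1}⟩`, which the
isomorphism transports to the telescopic numerical semigroup `⟨β₁, …, β_{r-1}⟩`.
There, with `dᵢ = gcd(β₁, …, βᵢ)` and `eᵢ = d_{i-1} / dᵢ`, the telescopic condition says that
`eᵢ βᵢ ∈ ⟨β₁, …, β_{i-1}⟩`, so dividing `aᵢ` by `eᵢ` from the top index down produces a
representation with `aᵢ < eᵢ`. Conversely, two such representations agree mod `d_{i-1}` up to the
top terms, so `aᵢ βᵢ ≡ bᵢ βᵢ [MOD d_{i-1}]`; as `gcd(d_{i-1}, βᵢ) = dᵢ` this gives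
`aᵢ ≡ bᵢ [MOD eᵢ]`, hence `aᵢ = bᵢ`.
-/

/-- `dtel α i = gcd(α₁, …, α_i)` (generators indexed from 1). -/
def dtel (α : ℕ → ℕ) (i : ℕ) : ℕ := (Finset.Icc 1 i).gcd α

/-- A telescopic sequence `α₁, …, α_r` of positive integers. -/
def IsTelescopic (r : ℕ) (α : ℕ → ℕ) : Prop :=
  (∀ i, 1 ≤ i → i ≤ r → 0 < α i) ∧
  dtel α r = 1 ∧
  ∀ i, 2 ≤ i → i ≤ r →
    α i / dtel α i ∈
      AddSubmonoid.closure {x : ℕ | ∃ j, 1 ≤ j ∧ j < i ∧ x = α j / dtel α (i - 1)}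

open Finset Function

theorem AddSubmonoid.exists_sum_nsmul_of_mem_closure_image {ι M : Type*} [AddCommMonoid M]
    {f : ι → M} {s : Finset ι} {x : M} (hx : x ∈ closure (f '' s)) :
    ∃ t : ι → ℕ, x = ∑ i ∈ s, t i • f i := by
  classical
  induction hx using closure_induction with
  | mem y hy =>
    obtain ⟨j, hj, rfl⟩ := hy
    exact ⟨Pi.single j 1, by simp [Pi.single_apply, ite_smul, Finset.mem_coe.mp hj]⟩
  | zero => exact ⟨0, by simp⟩
  | add y z _ _ hy hz =>
    obtain ⟨t, rfl⟩ := hy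
    obtain ⟨t', rfl⟩ := hz
    exact ⟨t + t', by simp [add_smul, sum_add_distrib]⟩

theorem Finset.sum_Icc_succ_top_update {α M : Type*} [AddCommMonoid M] (g : ℕ → α → M)
    (a : ℕ → α) (n : ℕ) (s : α) :
    ∑ i ∈ Icc 1 (n + 1), g i (update a (n + 1) s i) = ∑ i ∈ Icc 1 n, g i (a i) + g (n + 1) s := by
  rw [sum_Icc_succ_top (by omega), update_self]
  congr 1
  refine sum_congr rfl fun i hi => ?_
  rw [update_of_ne (by simp only [mem_Icc] at hi; omega)]

theorem eq_of_eqOn_Icc {M : Type*} [Zero M] {a b : ℕ → M} {n : ℕ}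
    (ha : ∀ i, (i = 0 ∨ n < i) → a i = 0) (hb : ∀ i, (i = 0 ∨ n < i) → b i = 0)
    (h : Set.EqOn a b (Icc 1 n)) : a = b := by
  funext i
  by_cases hi : i ∈ Icc 1 n
  · exact h hi
  · simp only [mem_Icc, not_and_or, not_le] at hi
    rw [ha i (by omega), hb i (by omega)]

theorem eqOn_Icc_succ {M : Type*} {a b : ℕ → M} {n : ℕ} (h : Set.EqOn a b (Icc 1 n))
    (htop : a (n + 1) = b (n + 1)) : Set.EqOn a b (Icc 1 (n + 1)) := by
  intro i hi
  simp only [coe_Icc, Set.mem_Icc] at hi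
  rcases hi.2.lt_or_eq with hi' | rfl
  · exact h (by simp only [coe_Icc, Set.mem_Icc]; omega)
  · exact htop

section dtel

variable {β : ℕ → ℕ}

@[simp]
theorem dtel_zero : dtel β 0 = 0 := by
  simp [dtel]

theorem dtel_dvd {i j : ℕ} (hj : j ∈ Icc 1 i) : dtel β i ∣ β j :=
  Finset.gcd_dvd hj

theorem dtel_succ (i : ℕ) : dtel β (i + 1) = Nat.gcd (dtel β i) (β (i + 1)) := by
  rw [dtel, ← insert_Icc_right_eq_Icc_add_one (by omega), gcd_insert, Nat.gcd_comm]
  rfl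

theorem dtel_succ_dvd (i : ℕ) : dtel β (i + 1) ∣ dtel β i := by
  rw [dtel_succ]
  exact Nat.gcd_dvd_left _ _

theorem dtel_pos (hβ : 0 < β 1) {i : ℕ} (hi : 1 ≤ i) : 0 < dtel β i :=
  Nat.pos_of_dvd_of_pos (dtel_dvd (by simp [hi])) hβ

theorem dtel_div_dtel_succ_pos (hβ : 0 < β 1) {i : ℕ} (hi : 1 ≤ i) :
    0 < dtel β i / dtel β (i + 1) :=
  Nat.div_pos (Nat.le_of_dvd (dtel_pos hβ hi) (dtel_succ_dvd i)) (dtel_pos hβ (by omega))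

end dtel

def IsReducedCoeffs (β : ℕ → ℕ) (n : ℕ) (a : ℕ → ℕ) : Prop :=
  ∀ i, 2 ≤ i → i ≤ n → a i < dtel β (i - 1) / dtel β i

theorem IsReducedCoeffs.of_succ {β a : ℕ → ℕ} {n : ℕ} (h : IsReducedCoeffs β (n + 1) a) :
    IsReducedCoeffs β n a :=
  fun i h2 hi => h i h2 (by omega)

theorem modEq_of_sum_Icc_succ_eq {β a b : ℕ → ℕ} {n : ℕ} (hβ : 0 < β 1) (hn : 1 ≤ n)
    (h : ∑ i ∈ Icc 1 (n + 1), a i * β i = ∑ i ∈ Icc 1 (n + 1), b i * β i) :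
    a (n + 1) ≡ b (n + 1) [MOD dtel β n / dtel β (n + 1)] := by
  have hlow (c : ℕ → ℕ) : ∑ i ∈ Icc 1 n, c i * β i ≡ 0 [MOD dtel β n] :=
    Nat.modEq_zero_iff_dvd.mpr (dvd_sum fun i hi => dvd_mul_of_dvd_right (dtel_dvd hi) _)
  rw [sum_Icc_succ_top (by omega), sum_Icc_succ_top (by omega)] at h
  have htop : a (n + 1) * β (n + 1) ≡ b (n + 1) * β (n + 1) [MOD dtel β n] :=
    ((hlow a).trans (hlow b).symm).add_left_cancel (by rw [h])
  rw [dtel_succ]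
  exact htop.cancel_right_div_gcd (dtel_pos hβ hn)

theorem eqOn_of_sum_mul_eq {β a b : ℕ → ℕ} {n : ℕ} (hβ : 0 < β 1) (ha : IsReducedCoeffs β n a)
    (hb : IsReducedCoeffs β n b) (h : ∑ i ∈ Icc 1 n, a i * β i = ∑ i ∈ Icc 1 n, b i * β i) :
    Set.EqOn a b (Icc 1 n) := by
  induction n with
  | zero => simp
  | succ n ih =>
    have htop : a (n + 1) = b (n + 1) := by
      rcases Nat.eq_zero_or_pos n with rfl | hn
      · simpa [hβ.ne'] using h
      · exact (modEq_of_sum_Icc_succ_eq hβ hn h).eq_of_lt_of_lt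
          (ha (n + 1) (by omega) le_rfl) (hb (n + 1) (by omega) le_rfl)
    rw [sum_Icc_succ_top (by omega), sum_Icc_succ_top (by omega), htop, add_left_inj] at h
    exact eqOn_Icc_succ (ih ha.of_succ hb.of_succ h) htop

namespace IsTelescopic

variable {m : ℕ} {β : ℕ → ℕ}

theorem one_le (hβ : IsTelescopic m β) : 1 ≤ m := by
  by_contra! hm
  simpa [Nat.lt_one_iff.mp hm] using hβ.2.1

theorem pos_one (hβ : IsTelescopic m β) : 0 < β 1 :=
  hβ.1 1 le_rfl hβ.one_le

theorem exists_sum_eq_dtel_div_mul (hβ : IsTelescopic m β) {k : ℕ} (hk : k + 1 ≤ m) :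
    ∃ t : ℕ → ℕ, dtel β k / dtel β (k + 1) * β (k + 1) = ∑ j ∈ Icc 1 k, t j * β j := by
  rcases Nat.eq_zero_or_pos k with rfl | hk1
  · exact ⟨0, by simp⟩
  have hmem := hβ.2.2 (k + 1) (by omega) hk
  rw [show {x | ∃ j, 1 ≤ j ∧ j < k + 1 ∧ x = β j / dtel β (k + 1 - 1)} =
      (fun j => β j / dtel β k) '' ↑(Icc 1 k) by
    ext x; simp [and_assoc, eq_comm]] at hmem
  obtain ⟨t, ht⟩ := AddSubmonoid.exists_sum_nsmul_of_mem_closure_image hmem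
  refine ⟨t, ?_⟩
  calc dtel β k / dtel β (k + 1) * β (k + 1)
      = dtel β k * (β (k + 1) / dtel β (k + 1)) := by
        rw [Nat.div_mul_right_comm (dtel_succ_dvd k), Nat.mul_div_assoc _ (dtel_dvd (by simp))]
    _ = ∑ j ∈ Icc 1 k, t j * (dtel β k * (β j / dtel β k)) := by
        rw [ht, mul_sum]
        exact sum_congr rfl fun j _ => by rw [smul_eq_mul, mul_left_comm]
    _ = ∑ j ∈ Icc 1 k, t j * β j :=
        sum_congr rfl fun j hj => by rw [Nat.mul_div_cancel' (dtel_dvd hj)]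

theorem exists_isReducedCoeffs_sum_eq (hβ : IsTelescopic m β) {n : ℕ} (hn : n ≤ m)
    (c : ℕ → ℕ) : ∃ a : ℕ → ℕ, (∀ i, (i = 0 ∨ n < i) → a i = 0) ∧ IsReducedCoeffs β n a ∧
      ∑ i ∈ Icc 1 n, a i * β i = ∑ i ∈ Icc 1 n, c i * β i := by
  induction n generalizing c with
  | zero => exact ⟨0, fun _ _ => rfl, fun i h2 hi => by omega, by simp⟩
  | succ n ih =>
    -- For `n = 0` we get `e = 0`, and `c 1 % 0 = c 1` keeps the whole coefficient.
    set e := dtel β n / dtel β (n + 1)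
    obtain ⟨t, ht⟩ := hβ.exists_sum_eq_dtel_div_mul hn
    obtain ⟨a, ha0, hred, hsum⟩ := ih (by omega) (c + (c (n + 1) / e) • t)
    refine ⟨update a (n + 1) (c (n + 1) % e), fun i hi => ?_, fun i h2 hi => ?_, ?_⟩
    · rw [update_of_ne (by omega)]
      exact ha0 i (by omega)
    · rcases hi.lt_or_eq with hi | rfl
      · rw [update_of_ne (by omega)]
        exact hred i h2 (by omega)
      · rw [update_self]
        exact Nat.mod_lt _ (dtel_div_dtel_succ_pos hβ.pos_one (by omega))
    · rw [sum_Icc_succ_top_update (fun i x => x * β i), hsum, sum_Icc_succ_top (by omega)]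
      simp only [Pi.add_apply, Pi.smul_apply, smul_eq_mul, add_mul, sum_add_distrib, mul_assoc,
        ← mul_sum, ← ht]
      nth_rewrite 3 [← Nat.div_add_mod (c (n + 1)) e]
      ring

end IsTelescopic

theorem coeff_eq_and_sum_eq_of_sum_Icc_succ_eq {M : Type*} [AddCancelCommMonoid M]
    (φ : M →+ ℤ) {α : ℕ → M} {n : ℕ} (hker : ∀ i ∈ Icc 1 n, φ (α i) = 0)
    (htop : φ (α (n + 1)) ≠ 0) {a b : ℕ → ℕ}
    (h : ∑ i ∈ Icc 1 (n + 1), a i • α i = ∑ i ∈ Icc 1 (n + 1), b i • α i) :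
    a (n + 1) = b (n + 1) ∧ ∑ i ∈ Icc 1 n, a i • α i = ∑ i ∈ Icc 1 n, b i • α i := by
  have hφ (c : ℕ → ℕ) :
      φ (∑ i ∈ Icc 1 (n + 1), c i • α i) = c (n + 1) * φ (α (n + 1)) := by
    rw [sum_Icc_succ_top (by omega), map_add, map_sum,
      sum_eq_zero fun i hi => by rw [map_nsmul, hker i hi, smul_zero], zero_add, map_nsmul,
      nsmul_eq_mul]
  have hcoeff : a (n + 1) = b (n + 1) := by
    have := congrArg φ h
    rw [hφ, hφ] at this
    exact_mod_cast mul_right_cancel₀ htop this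
  rw [sum_Icc_succ_top (by omega), sum_Icc_succ_top (by omega), hcoeff] at h
  exact ⟨hcoeff, add_right_cancel h⟩

theorem generalized_telescopic_Z2_unique_representation_general (r : ℕ)
    (α : ℕ → ℤ × ℤ) (β : ℕ → ℕ) (hβ : IsTelescopic (r - 1) β)
    (hline : ∃ u v : ℤ, (u, v) ≠ (0, 0) ∧
      (∀ i, 1 ≤ i → i ≤ r - 1 → u * (α i).1 + v * (α i).2 = 0) ∧
      u * (α r).1 + v * (α r).2 ≠ 0)
    (hiso : ∀ a b : ℕ → ℕ,
      (∑ i ∈ Finset.Icc 1 (r - 1), a i • α i = ∑ i ∈ Finset.Icc 1 (r - 1), b i • α i) ↔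
        (∑ i ∈ Finset.Icc 1 (r - 1), a i * β i = ∑ i ∈ Finset.Icc 1 (r - 1), b i * β i)) :
    ∀ x ∈ AddSubmonoid.closure {y : ℤ × ℤ | ∃ i, 1 ≤ i ∧ i ≤ r ∧ y = α i},
      ∃! a : ℕ → ℕ,
        (∀ i, (i = 0 ∨ r < i) → a i = 0) ∧
        (∀ i, 2 ≤ i → i ≤ r - 1 → a i < dtel β (i - 1) / dtel β i) ∧
        x = ∑ i ∈ Finset.Icc 1 r, a i • α i := by
  intro x hx
  obtain ⟨n, rfl⟩ : ∃ n, r = n + 1 := ⟨r - 1, by have := hβ.one_le; omega⟩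
  simp only [Nat.add_sub_cancel] at hβ hline hiso ⊢
  obtain ⟨u, v, -, hker, htop⟩ := hline
  let φ : ℤ × ℤ →+ ℤ := AddMonoidHom.mk' (fun y => u * y.1 + v * y.2) fun p q => by
    simp only [Prod.fst_add, Prod.snd_add]; ring
  rw [show {y : ℤ × ℤ | ∃ i, 1 ≤ i ∧ i ≤ n + 1 ∧ y = α i} = α '' ↑(Icc 1 (n + 1)) by
    ext y; simp [and_assoc, eq_comm]] at hx
  obtain ⟨t, rfl⟩ := AddSubmonoid.exists_sum_nsmul_of_mem_closure_image hx
  refine existsUnique_of_exists_of_unique ?_ ?_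
  · obtain ⟨a, ha0, hred, hsum⟩ := hβ.exists_isReducedCoeffs_sum_eq le_rfl t
    refine ⟨update a (n + 1) (t (n + 1)), fun i hi => ?_, fun i h2 hi => ?_, ?_⟩
    · rw [update_of_ne (by omega)]
      exact ha0 i (by omega)
    · rw [update_of_ne (by omega)]
      exact hred i h2 hi
    · rw [sum_Icc_succ_top_update (fun i c => c • α i), (hiso a t).mpr hsum,
        sum_Icc_succ_top (by omega)]
  · rintro a b ⟨ha0, hared, hax⟩ ⟨hb0, hbred, hbx⟩
    obtain ⟨hcoeff, hlow⟩ := coeff_eq_and_sum_eq_of_sum_Icc_succ_eq φ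
      (fun i hi => hker i (mem_Icc.mp hi).1 (mem_Icc.mp hi).2) htop (hax.symm.trans hbx)
    exact eq_of_eqOn_Icc ha0 hb0
      (eqOn_Icc_succ (eqOn_of_sum_mul_eq hβ.pos_one hared hbred ((hiso a b).mp hlow)) hcoeff)

/-- unique representation in a generalized telescopic semigroup in ℤ²
(lexicographic order): `α₁, …, α_{r-1}` lie on a line through the origin, `α_r` does not,
and `⟨α₁,…,α_{r-1}⟩` is isomorphic as an ordered semigroup to a telescopic semigroup
`⟨β₁,…,β_{r-1}⟩` via `α_i ↦ β_i`. Then every element of the semigroup spanned by the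
`α_i` is uniquely `Σ a_i α_i` with `a₁, a_r ≥ 0` and
`0 ≤ a_i < gcd(β₁,…,β_{i-1})/gcd(β₁,…,β_i)` for `2 ≤ i ≤ r-1`. -/
theorem generalized_telescopic_Z2_unique_representation (r : ℕ) (hr : 2 ≤ r)
    (α : ℕ → ℤ × ℤ) (β : ℕ → ℕ) (hβ : IsTelescopic (r - 1) β)
    (hline : ∃ u v : ℤ, (u, v) ≠ (0, 0) ∧
      (∀ i, 1 ≤ i → i ≤ r - 1 → u * (α i).1 + v * (α i).2 = 0) ∧
      u * (α r).1 + v * (α r).2 ≠ 0)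
    (hwf : Set.IsWF {x : ℤ ×ₗ ℤ |
      ofLex x ∈ AddSubmonoid.closure {y : ℤ × ℤ | ∃ i, 1 ≤ i ∧ i ≤ r ∧ y = α i}})
    (hiso : ∀ a b : ℕ → ℕ,
      (∑ i ∈ Finset.Icc 1 (r - 1), a i • α i = ∑ i ∈ Finset.Icc 1 (r - 1), b i • α i) ↔
        (∑ i ∈ Finset.Icc 1 (r - 1), a i * β i = ∑ i ∈ Finset.Icc 1 (r - 1), b i * β i))
    (hord : ∀ a b : ℕ → ℕ,
      (toLex (∑ i ∈ Finset.Icc 1 (r - 1), a i • α i) ≤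
          toLex (∑ i ∈ Finset.Icc 1 (r - 1), b i • α i)) ↔
        (∑ i ∈ Finset.Icc 1 (r - 1), a i * β i ≤ ∑ i ∈ Finset.Icc 1 (r - 1), b i * β i)) :
    ∀ x ∈ AddSubmonoid.closure {y : ℤ × ℤ | ∃ i, 1 ≤ i ∧ i ≤ r ∧ y = α i},
      ∃! a : ℕ → ℕ,
        (∀ i, (i = 0 ∨ r < i) → a i = 0) ∧
        (∀ i, 2 ≤ i → i ≤ r - 1 → a i < dtel β (i - 1) / dtel β i) ∧
        x = ∑ i ∈ Finset.Icc 1 r, a i • α i :=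
  generalized_telescopic_Z2_unique_representation_general r α β hβ hline hiso
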